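/- arXiv:2110.07894 — 3 statements merged into one kernel-verified Lean document; each statement's English description precedes it below -/
import Mathlib

section
/- Let L be a real symmetric positive semidefinite n×n matrix, q > 0, y ∈ ℝⁿ, K⁻¹ = (1/q)(qI + L), and let x̄ be a square-integrable random vector in ℝⁿ with tr(Var(K⁻¹x̄)) > 0 and α* := tr(Cov(K⁻¹x̄, x̄))/tr(Var(K⁻¹x̄)) > 0. Then for every α with 0 < α < 2α*, the estimator z̄(α) = x̄ − α(K⁻¹x̄ − y) has strictly smaller variance than x̄: tr(Var(z̄(α))) < tr(Var(x̄)). -/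
open MeasureTheory Matrix RealInnerProductSpace

/-! Centering removes `y`, so with `f = x̄ - m` the variance of `z̄(α)` is `∫ ‖f - α • K⁻¹ f‖²`,
which expands to the quadratic `V(0) - 2αc + α²b`. It lies strictly below `V(0)` exactly when
`0 < α < 2c/b = 2α*`. -/

section

variable {Ω E : Type*} [MeasurableSpace Ω] {μ : Measure Ω}
  [NormedAddCommGroup E] [InnerProductSpace ℝ E]

theorem MeasureTheory.MemLp.integrable_inner {f g : Ω → E} (hf : MemLp f 2 μ)
    (hg : MemLp g 2 μ) : Integrable (fun ω => ⟪f ω, g ω⟫) μ := by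
  refine (L2.integrable_inner (𝕜 := ℝ) (hf.toLp f) (hg.toLp g)).congr ?_
  filter_upwards [hf.coeFn_toLp, hg.coeFn_toLp] with ω hfω hgω
  rw [hfω, hgω]

theorem MeasureTheory.MemLp.integrable_norm_sq {f : Ω → E} (hf : MemLp f 2 μ) :
    Integrable (fun ω => ‖f ω‖ ^ 2) μ :=
  (hf.integrable_inner hf).congr (.of_forall fun ω => real_inner_self_eq_norm_sq (f ω))

theorem integral_norm_sub_smul_sq {f g : Ω → E} (hf : MemLp f 2 μ) (hg : MemLp g 2 μ)
    (α : ℝ) :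
    ∫ ω, ‖f ω - α • g ω‖ ^ 2 ∂μ
      = ∫ ω, ‖f ω‖ ^ 2 ∂μ - 2 * α * ∫ ω, ⟪g ω, f ω⟫ ∂μ + α ^ 2 * ∫ ω, ‖g ω‖ ^ 2 ∂μ := by
  have hexpand : ∀ ω, ‖f ω - α • g ω‖ ^ 2
      = ‖f ω‖ ^ 2 - 2 * α * ⟪g ω, f ω⟫ + α ^ 2 * ‖g ω‖ ^ 2 := fun ω => by
    rw [norm_sub_sq_real, real_inner_smul_right, norm_smul, mul_pow, real_inner_comm,
      Real.norm_eq_abs, sq_abs]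
    ring
  have hf2 : Integrable (fun ω => ‖f ω‖ ^ 2) μ := hf.integrable_norm_sq
  have hgf : Integrable (fun ω => 2 * α * ⟪g ω, f ω⟫) μ := (hg.integrable_inner hf).const_mul _
  have hg2 : Integrable (fun ω => α ^ 2 * ‖g ω‖ ^ 2) μ := hg.integrable_norm_sq.const_mul _
  simp only [hexpand]
  rw [integral_add (f := fun ω => ‖f ω‖ ^ 2 - 2 * α * ⟪g ω, f ω⟫) (hf2.sub hgf) hg2,
    integral_sub hf2 hgf, integral_const_mul, integral_const_mul]

variable [CompleteSpace E] [IsProbabilityMeasure μ]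

theorem integral_sub_smul_map_sub {X : Ω → E} (hX : Integrable X μ) (T : E →L[ℝ] E)
    (y : E) (α : ℝ) :
    ∫ ω, X ω - α • (T (X ω) - y) ∂μ = ∫ ω, X ω ∂μ - α • (T (∫ ω, X ω ∂μ) - y) := by
  have hTX : Integrable (fun ω => T (X ω)) μ := T.integrable_comp hX
  have hTXy : Integrable (fun ω => α • (T (X ω) - y)) μ := (hTX.sub (integrable_const y)).smul α
  rw [integral_sub hX hTXy, integral_smul, integral_sub hTX (integrable_const y),
    T.integral_comp_comm hX, integral_const, probReal_univ, one_smul]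

theorem sub_smul_map_sub_sub_integral {X : Ω → E} (hX : Integrable X μ) (T : E →L[ℝ] E)
    (y : E) (α : ℝ) (ω : Ω) :
    X ω - α • (T (X ω) - y) - ∫ ω', X ω' - α • (T (X ω') - y) ∂μ
      = (X ω - ∫ ω', X ω' ∂μ) - α • T (X ω - ∫ ω', X ω' ∂μ) := by
  rw [integral_sub_smul_map_sub hX, map_sub]
  module

end

theorem sub_two_mul_mul_add_sq_mul_lt {a b c α : ℝ} (hb : 0 < b) (hα : 0 < α)
    (hαc : α < 2 * (c / b)) : a - 2 * α * c + α ^ 2 * b < a := by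
  have hαb : α * b < 2 * c := by
    rwa [← mul_div_assoc, lt_div_iff₀ hb] at hαc
  nlinarith

theorem stmt_4_general {n : ℕ} (y : EuclideanSpace ℝ (Fin n))
    (Kinv : Matrix (Fin n) (Fin n) ℝ)
    {Ω : Type} [MeasurableSpace Ω] (μ : Measure Ω) [IsProbabilityMeasure μ]
    (xbar : Ω → EuclideanSpace ℝ (Fin n)) (hx : MemLp xbar 2 μ)
    (m : EuclideanSpace ℝ (Fin n)) (hm : m = ∫ ω, xbar ω ∂μ)
    (b : ℝ) (hb : b = ∫ ω, ‖Matrix.toEuclideanLin Kinv (xbar ω - m)‖ ^ 2 ∂μ)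
    (hbpos : 0 < b)
    (c : ℝ) (hc : c = ∫ ω, ⟪Matrix.toEuclideanLin Kinv (xbar ω - m), xbar ω - m⟫ ∂μ)
    (αstar : ℝ) (hαstar : αstar = c / b)
    (zbar : ℝ → Ω → EuclideanSpace ℝ (Fin n))
    (hzbar : zbar = fun α ω => xbar ω - α • (Matrix.toEuclideanLin Kinv (xbar ω) - y))
    (V : ℝ → ℝ)
    (hV : V = fun α => ∫ ω, ‖zbar α ω - ∫ ω', zbar α ω' ∂μ‖ ^ 2 ∂μ) :
    ∀ α : ℝ, 0 < α → α < 2 * αstar → V α < ∫ ω, ‖xbar ω - m‖ ^ 2 ∂μ := by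
  intro α hα hαlt
  set T := (Matrix.toEuclideanLin Kinv).toContinuousLinearMap
  have hcentered : MemLp (fun ω => xbar ω - m) 2 μ := hx.sub (memLp_const m)
  have hTcentered : MemLp (fun ω => T (xbar ω - m)) 2 μ := T.comp_memLp' hcentered
  have hVα : V α = ∫ ω, ‖xbar ω - m‖ ^ 2 ∂μ - 2 * α * c + α ^ 2 * b := by
    have hT : ∀ v, Matrix.toEuclideanLin Kinv v = T v := fun _ => rfl
    rw [hV, hzbar]
    simp only [hT, sub_smul_map_sub_sub_integral (hx.integrable one_le_two) T y α, ← hm]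
    rw [integral_norm_sub_smul_sq hcentered hTcentered]
    simp only [hb, hc, hT]
  rw [hVα]
  exact sub_two_mul_mul_add_sq_mul_lt hbpos hα (hαstar ▸ hαlt)

/-- If 0 < α < 2α*, the corrected estimator z̄(α) has strictly smaller
variance than x̄. -/
theorem stmt_4 {n : ℕ} (L : Matrix (Fin n) (Fin n) ℝ) (hL : L.PosSemidef)
    (q : ℝ) (hq : 0 < q) (y : EuclideanSpace ℝ (Fin n))
    (Kinv : Matrix (Fin n) (Fin n) ℝ)
    (hKinv : Kinv = (1 / q) • (q • (1 : Matrix (Fin n) (Fin n) ℝ) + L))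
    {Ω : Type} [MeasurableSpace Ω] (μ : Measure Ω) [IsProbabilityMeasure μ]
    (xbar : Ω → EuclideanSpace ℝ (Fin n)) (hx : MemLp xbar 2 μ)
    (m : EuclideanSpace ℝ (Fin n)) (hm : m = ∫ ω, xbar ω ∂μ)
    (b : ℝ) (hb : b = ∫ ω, ‖Matrix.toEuclideanLin Kinv (xbar ω - m)‖ ^ 2 ∂μ)
    (hbpos : 0 < b)
    (c : ℝ) (hc : c = ∫ ω, ⟪Matrix.toEuclideanLin Kinv (xbar ω - m), xbar ω - m⟫ ∂μ)
    (αstar : ℝ) (hαstar : αstar = c / b) (hαstarpos : 0 < αstar)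
    (zbar : ℝ → Ω → EuclideanSpace ℝ (Fin n))
    (hzbar : zbar = fun α ω => xbar ω - α • (Matrix.toEuclideanLin Kinv (xbar ω) - y))
    (V : ℝ → ℝ)
    (hV : V = fun α => ∫ ω, ‖zbar α ω - ∫ ω', zbar α ω' ∂μ‖ ^ 2 ∂μ) :
    ∀ α : ℝ, 0 < α → α < 2 * αstar → V α < ∫ ω, ‖xbar ω - m‖ ^ 2 ∂μ :=
  stmt_4_general y Kinv μ xbar hx m hm b hb hbpos c hc αstar hαstar zbar hzbar V hV
end

section
/- Let G be a finite simple graph on n vertices with graph Laplacian L = D − W (D the diagonal degree matrix, W the adjacency matrix), let d_max be the maximum degree of G, and let q > 0. Set K⁻¹ = (1/q)(qI + L) and α = 2q/(q + 2·d_max). Then for all vectors v ∈ ℝⁿ, ‖(I − αK⁻¹)v‖₂ ≤ ‖v‖₂. In particular, for any x̄, x̂ ∈ ℝⁿ and y ∈ ℝⁿ with x̂ = q(qI + L)⁻¹y and z̄ = x̄ − α(K⁻¹x̄ − y), one has ‖z̄ − x̂‖₂ ≤ ‖x̄ − x̂‖₂. -/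
/-!
Write `K⁻¹ = (1/q)(qI + L)`. Since `0 ≤ xᵀLx ≤ 2 d_max ‖x‖²` (expand `xᵀLx` as a sum over
edges and use `(a - b)² ≤ 2a² + 2b²`), the matrix `N = αK⁻¹` satisfies `0 ≤ N ≤ 2`, the step size
`α = 2q/(q + 2 d_max)` being exactly the one that makes the upper bound `2`. For a symmetric
`0 ≤ N ≤ c`, Cauchy–Schwarz for the semi-inner product `xᵀNy` gives `‖Nx‖² ≤ c·xᵀNx`, and
with `c = 2` this says `‖(I - N)x‖² = ‖x‖² - 2xᵀNx + ‖Nx‖² ≤ ‖x‖²`. Finally `K⁻¹x̂ = y`, so the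
gradient step satisfies `z̄ - x̂ = (I - αK⁻¹)(x̄ - x̂)`.
-/

open Matrix

namespace Matrix

variable {ι : Type*} [Fintype ι]

theorem IsSymm.dotProduct_mulVec_comm {R : Type*} [CommSemiring R] {A : Matrix ι ι R}
    (hA : A.IsSymm) (x y : ι → R) : x ⬝ᵥ (A *ᵥ y) = y ⬝ᵥ (A *ᵥ x) := by
  rw [dotProduct_mulVec, ← mulVec_transpose, hA.eq, dotProduct_comm]

namespace PosSemidef

variable {A : Matrix ι ι ℝ}

theorem mulVec_dotProduct_mulVec_le (hA : A.PosSemidef) {c : ℝ} (hc : 0 ≤ c)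
    (hAc : ∀ x, x ⬝ᵥ (A *ᵥ x) ≤ c * (x ⬝ᵥ x)) (x : ι → ℝ) :
    (A *ᵥ x) ⬝ᵥ (A *ᵥ x) ≤ c * (x ⬝ᵥ (A *ᵥ x)) := by
  classical
  have hnonneg (y : ι → ℝ) : 0 ≤ y ⬝ᵥ (A *ᵥ y) := by
    simpa using hA.dotProduct_mulVec_nonneg y
  have hcs := LinearMap.BilinForm.apply_mul_apply_le_of_forall_zero_le (toLinearMap₂' ℝ A)
    (fun y => by simpa only [toLinearMap₂'_apply'] using hnonneg y) x (A *ᵥ x)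
  simp only [toLinearMap₂'_apply',
    (isHermitian_iff_isSymm.mp hA.1).dotProduct_mulVec_comm x (A *ᵥ x)] at hcs
  set u := (A *ᵥ x) ⬝ᵥ (A *ᵥ x)
  have hu : u * u ≤ c * (x ⬝ᵥ (A *ᵥ x)) * u := by
    nlinarith [hcs.trans (mul_le_mul_of_nonneg_left (hAc (A *ᵥ x)) (hnonneg x))]
  rcases le_or_gt u 0 with hnpos | hpos
  · exact hnpos.trans (mul_nonneg hc (hnonneg x))
  · exact le_of_mul_le_mul_right hu hpos

theorem norm_toEuclideanLin_one_sub_le [DecidableEq ι] (hA : A.PosSemidef)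
    (hA2 : ∀ x, x ⬝ᵥ (A *ᵥ x) ≤ 2 * (x ⬝ᵥ x)) (v : EuclideanSpace ℝ ι) :
    ‖toEuclideanLin (1 - A) v‖ ≤ ‖v‖ := by
  rw [← sq_le_sq₀ (norm_nonneg _) (norm_nonneg _), ← real_inner_self_eq_norm_sq,
    ← real_inner_self_eq_norm_sq]
  have hAv := hA.mulVec_dotProduct_mulVec_le two_pos.le hA2 v.ofLp
  simp only [EuclideanSpace.inner_eq_star_dotProduct, ofLp_toLpLin, toLin'_apply, sub_mulVec,
    one_mulVec, star_trivial, dotProduct_sub, sub_dotProduct, dotProduct_comm _ v.ofLp]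
  linarith

end PosSemidef

theorem sub_toEuclideanLin_eq_toEuclideanLin_one_sub_smul [DecidableEq ι] {K M : Matrix ι ι ℝ}
    (hKM : K * M = 1) (α : ℝ) (x y : EuclideanSpace ℝ ι) :
    x - α • (toEuclideanLin K x - y) - toEuclideanLin M y =
      toEuclideanLin (1 - α • K) (x - toEuclideanLin M y) := by
  have hfix : toEuclideanLin K (toEuclideanLin M y) = y := by
    rw [← LinearMap.comp_apply, ← toLpLin_mul, hKM, toLpLin_one, LinearMap.id_apply]
  simp only [map_sub, map_smul, LinearMap.sub_apply, LinearMap.smul_apply, toLpLin_one,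
    LinearMap.id_apply, hfix]
  module

end Matrix

namespace SimpleGraph

variable {V : Type*} [Fintype V] [DecidableEq V] (G : SimpleGraph V) [DecidableRel G.Adj]

theorem dotProduct_lapMatrix_mulVec_le {d : ℝ} (hd : ∀ v, (G.degree v : ℝ) ≤ d) (x : V → ℝ) :
    x ⬝ᵥ (G.lapMatrix ℝ *ᵥ x) ≤ 2 * d * (x ⬝ᵥ x) := by
  have hswap : (∑ i, ∑ j, if G.Adj i j then x j ^ 2 else 0) =
      ∑ i, ∑ j, if G.Adj i j then x i ^ 2 else 0 := by
    rw [Finset.sum_comm]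
    exact Finset.sum_congr rfl fun i _ => Finset.sum_congr rfl fun j _ =>
      if_congr (G.adj_comm j i) rfl rfl
  have hdeg : (∑ i, ∑ j, if G.Adj i j then x i ^ 2 else 0) =
      ∑ i, (G.degree i : ℝ) * x i ^ 2 := by
    refine Finset.sum_congr rfl fun i _ => ?_
    rw [G.degree_eq_sum_if_adj, Finset.sum_mul]
    simp only [ite_mul, one_mul, zero_mul]
  rw [← toLinearMap₂'_apply', lapMatrix_toLinearMap₂']
  calc (∑ i, ∑ j, if G.Adj i j then (x i - x j) ^ 2 else 0) / 2
      ≤ (∑ i, ∑ j, 2 * ((if G.Adj i j then x i ^ 2 else 0) +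
          if G.Adj i j then x j ^ 2 else 0)) / 2 := by
        gcongr with i _ j _
        split_ifs
        · nlinarith [sq_nonneg (x i + x j)]
        · simp
    _ = 2 * ∑ i, (G.degree i : ℝ) * x i ^ 2 := by
        simp_rw [← Finset.mul_sum, Finset.sum_add_distrib, hswap, hdeg]
        ring
    _ ≤ 2 * ∑ i, d * x i ^ 2 := by gcongr with i; exact hd i
    _ = 2 * d * (x ⬝ᵥ x) := by simp [dotProduct, Finset.mul_sum, sq, mul_assoc]

theorem posDef_smul_one_add_lapMatrix {q : ℝ} (hq : 0 < q) :
    (q • (1 : Matrix V V ℝ) + G.lapMatrix ℝ).PosDef :=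
  (PosDef.one.smul hq).add_posSemidef (G.posSemidef_lapMatrix ℝ)

theorem dotProduct_smul_one_add_lapMatrix_mulVec_le (q : ℝ) {d : ℝ}
    (hd : ∀ v, (G.degree v : ℝ) ≤ d) (x : V → ℝ) :
    x ⬝ᵥ ((q • (1 : Matrix V V ℝ) + G.lapMatrix ℝ) *ᵥ x) ≤ (q + 2 * d) * (x ⬝ᵥ x) := by
  rw [add_mulVec, smul_mulVec, one_mulVec, dotProduct_add, dotProduct_smul, smul_eq_mul]
  linarith [G.dotProduct_lapMatrix_mulVec_le hd x]

theorem norm_toEuclideanLin_one_sub_smul_le {q d α : ℝ} (hq : 0 < q)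
    (hd : ∀ v, (G.degree v : ℝ) ≤ d) (hα0 : 0 ≤ α) (hα : α * (q + 2 * d) ≤ 2 * q)
    (v : EuclideanSpace ℝ V) :
    ‖toEuclideanLin (1 - α • ((1 / q) • (q • (1 : Matrix V V ℝ) + G.lapMatrix ℝ))) v‖ ≤ ‖v‖ := by
  have hN : (α • ((1 / q) • (q • (1 : Matrix V V ℝ) + G.lapMatrix ℝ))).PosSemidef :=
    ((G.posDef_smul_one_add_lapMatrix hq).posSemidef.smul (by positivity)).smul hα0
  refine hN.norm_toEuclideanLin_one_sub_le (fun x => ?_) v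
  have hscale : α * (1 / q) * (q + 2 * d) ≤ 2 := by
    rw [one_div, mul_right_comm, mul_inv_le_iff₀ hq]
    exact hα
  rw [smul_smul, smul_mulVec, dotProduct_smul, smul_eq_mul]
  calc α * (1 / q) * (x ⬝ᵥ ((q • 1 + G.lapMatrix ℝ) *ᵥ x))
      ≤ α * (1 / q) * ((q + 2 * d) * (x ⬝ᵥ x)) :=
        mul_le_mul_of_nonneg_left (G.dotProduct_smul_one_add_lapMatrix_mulVec_le q hd x)
          (mul_nonneg hα0 (by positivity))
    _ = α * (1 / q) * (q + 2 * d) * (x ⬝ᵥ x) := by ring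
    _ ≤ 2 * (x ⬝ᵥ x) := mul_le_mul_of_nonneg_right hscale (dotProduct_self_star_nonneg x)

end SimpleGraph

/-- For a graph Laplacian, the step size α = 2q/(q + 2 d_max) makes
I − αK⁻¹ a contraction, hence the gradient step does not increase the
distance to the Tikhonov solution. -/
theorem stmt_5 {n : ℕ} (G : SimpleGraph (Fin n)) [DecidableRel G.Adj]
    (q : ℝ) (hq : 0 < q)
    (dmax : ℕ) (hdmax : dmax = Finset.univ.sup fun v => G.degree v)
    (Kinv : Matrix (Fin n) (Fin n) ℝ)
    (hKinv : Kinv = (1 / q) • (q • (1 : Matrix (Fin n) (Fin n) ℝ) + G.lapMatrix ℝ))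
    (α : ℝ) (hα : α = 2 * q / (q + 2 * (dmax : ℝ))) :
    (∀ v : EuclideanSpace ℝ (Fin n),
        ‖Matrix.toEuclideanLin ((1 : Matrix (Fin n) (Fin n) ℝ) - α • Kinv) v‖ ≤ ‖v‖)
    ∧ ∀ xbar xhat y : EuclideanSpace ℝ (Fin n),
        xhat = Matrix.toEuclideanLin
          (q • (q • (1 : Matrix (Fin n) (Fin n) ℝ) + G.lapMatrix ℝ)⁻¹) y →
        ∀ zbar : EuclideanSpace ℝ (Fin n),
          zbar = xbar - α • (Matrix.toEuclideanLin Kinv xbar - y) →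
          ‖zbar - xhat‖ ≤ ‖xbar - xhat‖ := by
  have hdeg (v : Fin n) : (G.degree v : ℝ) ≤ dmax := by
    rw [hdmax]
    exact_mod_cast Finset.le_sup (f := fun v => G.degree v) (Finset.mem_univ v)
  have hα_le : α * (q + 2 * dmax) ≤ 2 * q := by
    rw [hα, div_mul_cancel₀ _ (by positivity)]
  have hcontr (v : EuclideanSpace ℝ (Fin n)) : ‖toEuclideanLin (1 - α • Kinv) v‖ ≤ ‖v‖ := by
    rw [hKinv]
    exact G.norm_toEuclideanLin_one_sub_smul_le hq hdeg (by rw [hα]; positivity) hα_le v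
  refine ⟨hcontr, fun xbar xhat y hxhat zbar hzbar => ?_⟩
  set A := q • (1 : Matrix (Fin n) (Fin n) ℝ) + G.lapMatrix ℝ
  have hKA : Kinv * (q • A⁻¹) = 1 := by
    have hA := (G.posDef_smul_one_add_lapMatrix hq).isUnit
    rw [hKinv, smul_mul_smul, one_div_mul_cancel hq.ne', one_smul,
      mul_nonsing_inv A ((isUnit_iff_isUnit_det A).mp hA)]
  rw [hzbar, hxhat, sub_toEuclideanLin_eq_toEuclideanLin_one_sub_smul hKA]
  exact hcontr _
end

section
/- Let D be a real diagonal n×n matrix with strictly positive diagonal entries, let L be a real symmetric positive semidefinite n×n matrix such that every eigenvalue of the normalized matrix D^{-1/2} L D^{-1/2} is at most 2, let μ > 0, and set K = (D + (2/μ)L)⁻¹D and α = 2μ/(μ + 4). Then every element ν of the real spectrum of the matrix I − αK⁻¹ = I − α(I + (2/μ)D⁻¹L) satisfies |ν| ≤ 1. -/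
/-!
Writing `S = D^{1/2}` and `N = D^{-1/2} L D^{-1/2}`, the matrix `D⁻¹L = S⁻¹ (S⁻¹ L)` has the
same spectrum as `(S⁻¹ L) S⁻¹ = N`, which lies in `[0, 2]` (`N` is positive semidefinite and
normalized). Since `I - α(I + (2/μ)D⁻¹L)` is an affine function of `D⁻¹L`, its real spectrum is
`{(4 - μ - 4y)/(μ + 4) | y ∈ σ(N)}`, and `y ∈ [0, 2]` gives exactly `|ν| ≤ 1`.
-/

open Matrix

open scoped Pointwise

theorem Matrix.spectrum_mul_comm {n K : Type*} [Fintype n] [DecidableEq n] [Field K]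
    (A B : Matrix n n K) : spectrum K (A * B) = spectrum K (B * A) := by
  ext r
  simp only [mem_spectrum_iff_isRoot_charpoly, charpoly_mul_comm]

theorem Matrix.inv_diagonal_eq_diagonal_inv_sqrt_mul_self {n : Type*} [Fintype n]
    [DecidableEq n] {d : n → ℝ} (hd : ∀ i, 0 < d i) :
    (diagonal d)⁻¹ =
      diagonal (fun i => (Real.sqrt (d i))⁻¹) * diagonal (fun i => (Real.sqrt (d i))⁻¹) := by
  refine inv_eq_right_inv ?_
  rw [diagonal_mul_diagonal, diagonal_mul_diagonal, ← diagonal_one]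
  congr 1
  ext i
  rw [← mul_inv, Real.mul_self_sqrt (hd i).le, mul_inv_cancel₀ (hd i).ne']

theorem Matrix.spectrum_inv_diagonal_mul {n : Type*} [Fintype n] [DecidableEq n]
    {d : n → ℝ} (hd : ∀ i, 0 < d i) (L : Matrix n n ℝ) :
    spectrum ℝ ((diagonal d)⁻¹ * L) =
      spectrum ℝ (diagonal (fun i => (Real.sqrt (d i))⁻¹) * L *
        diagonal (fun i => (Real.sqrt (d i))⁻¹)) := by
  rw [inv_diagonal_eq_diagonal_inv_sqrt_mul_self hd, mul_assoc, spectrum_mul_comm]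

theorem Matrix.PosSemidef.diagonal_mul_mul_diagonal {n : Type*} [Fintype n] [DecidableEq n]
    {L : Matrix n n ℝ} (hL : L.PosSemidef) (s : n → ℝ) :
    (diagonal s * L * diagonal s).PosSemidef := by
  simpa [diagonal_conjTranspose] using hL.mul_mul_conjTranspose_same (diagonal s)

theorem spectrum.one_sub_smul_one_add_smul {𝕜 A : Type*} [Field 𝕜] [Ring A] [Algebra 𝕜 A]
    {α c : 𝕜} (hαc : α * c ≠ 0) (a : A) :
    spectrum 𝕜 (1 - α • (1 + c • a)) = (fun y => 1 - α - α * c * y) '' spectrum 𝕜 a := by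
  have affine : (1 - α • (1 + c • a) : A) = algebraMap 𝕜 A (1 - α) + (-(α * c)) • a := by
    rw [Algebra.algebraMap_eq_smul_one, smul_add, smul_smul, sub_smul, one_smul, neg_smul]
    abel
  rw [affine, ← spectrum.singleton_add_eq, ← Units.val_mk0 (neg_ne_zero.mpr hαc),
    ← Units.smul_def, spectrum.unit_smul_eq_smul, Set.singleton_add, Units.smul_def,
    ← Set.image_smul, Set.image_image, Units.val_mk0]
  congr 1
  ext y
  simp only [smul_eq_mul]
  ring

theorem abs_one_sub_le_one_of_mem_Icc {μ y : ℝ} (hμ : 0 < μ) (hy0 : 0 ≤ y) (hy2 : y ≤ 2) :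
    |1 - 2 * μ / (μ + 4) - 2 * μ / (μ + 4) * (2 / μ) * y| ≤ 1 := by
  have hμ4 : 0 < μ + 4 := by linarith
  rw [show 1 - 2 * μ / (μ + 4) - 2 * μ / (μ + 4) * (2 / μ) * y = (4 - μ - 4 * y) / (μ + 4) by
    field_simp; ring, abs_le, le_div_iff₀ hμ4, div_le_iff₀ hμ4]
  constructor <;> linarith

/-- In the generalized SSL setting with K = (D + (2/μ)L)⁻¹D and
α = 2μ/(μ+4), every real spectral value of I − αK⁻¹ = I − α(I + (2/μ)D⁻¹L)
has absolute value at most 1, provided the eigenvalues of the normalized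
matrix D^{-1/2} L D^{-1/2} are at most 2. -/
theorem stmt_15 {n : ℕ} (d : Fin n → ℝ) (hd : ∀ i, 0 < d i)
    (L : Matrix (Fin n) (Fin n) ℝ) (hL : L.PosSemidef)
    (hnorm : ∀ ν ∈ spectrum ℝ
        ((Matrix.diagonal fun i => (Real.sqrt (d i))⁻¹) * L *
          (Matrix.diagonal fun i => (Real.sqrt (d i))⁻¹)), ν ≤ 2)
    (μ : ℝ) (hμ : 0 < μ) (α : ℝ) (hα : α = 2 * μ / (μ + 4)) :
    ∀ ν ∈ spectrum ℝ ((1 : Matrix (Fin n) (Fin n) ℝ) -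
        α • ((1 : Matrix (Fin n) (Fin n) ℝ) +
          (2 / μ) • ((Matrix.diagonal d)⁻¹ * L))),
      |ν| ≤ 1 := by
  have hαc : α * (2 / μ) ≠ 0 := by rw [hα]; positivity
  intro ν hν
  rw [spectrum.one_sub_smul_one_add_smul hαc, spectrum_inv_diagonal_mul hd] at hν
  obtain ⟨y, hy, rfl⟩ := hν
  have hy0 : 0 ≤ y := (posSemidef_iff_isHermitian_and_spectrum_nonneg.mp
    (hL.diagonal_mul_mul_diagonal _)).2 hy
  rw [hα]
  exact abs_one_sub_le_one_of_mem_Icc hμ hy0 (hnorm y hy)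
end
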